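/- Let n ≥ 1 and call a family F of ⌊n/2⌋-element subsets of {1,...,n} a 'sparse paving' family if its members pairwise intersect in at most ⌊n/2⌋-2 elements. Then there exists an injection from the set of sparse paving families into the set of matroids on {1,...,n}, so the number of matroids on a fixed n-element set is at least the number of such families. -/
import Mathlib


/-- `r` is a matroid rank function. -/
def IsMatroidRank {n : ℕ} (r : Finset (Fin n) → ℕ) : Prop :=
  (∀ X : Finset (Fin n), r X ≤ X.card) ∧
  (∀ X Y : Finset (Fin n), X ⊆ Y → r X ≤ r Y) ∧
  (∀ X Y : Finset (Fin n), r (X ∪ Y) + r (X ∩ Y) ≤ r X + r Y)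

/-- A sparse paving family: a collection of `⌊n/2⌋`-element subsets of `{1,…,n}`
any two distinct members of which intersect in at most `⌊n/2⌋ - 2` elements. -/
def IsSparsePavingFamily (n : ℕ) (S : Finset (Finset (Fin n))) : Prop :=
  (∀ A ∈ S, A.card = n / 2) ∧
  (∀ A ∈ S, ∀ B ∈ S, A ≠ B → (A ∩ B).card + 2 ≤ n / 2)

lemma sparse_paving_rank_isMatroid {n : ℕ} (hk : 1 ≤ n / 2)
    {S : Finset (Finset (Fin n))} (hS : IsSparsePavingFamily n S) :
    IsMatroidRank (fun X => min X.card (n / 2) - (if X ∈ S then 1 else 0)) := by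
  obtain ⟨h1, h2⟩ := hS
  refine ⟨?_, ?_, ?_⟩
  · intro X
    show min X.card (n / 2) - (if X ∈ S then 1 else 0) ≤ X.card
    split_ifs <;> omega
  · intro X Y hXY
    show min X.card (n / 2) - (if X ∈ S then 1 else 0) ≤
      min Y.card (n / 2) - (if Y ∈ S then 1 else 0)
    have hc : X.card ≤ Y.card := Finset.card_le_card hXY
    by_cases hX : X ∈ S <;> by_cases hY : Y ∈ S
    · have hcX := h1 X hX
      have hcY := h1 Y hY
      rw [if_pos hX, if_pos hY]; omega
    · have hcX := h1 X hX
      rw [if_pos hX, if_neg hY]; omega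
    · have hne : X ≠ Y := by rintro rfl; exact hX hY
      have hlt : X.card < Y.card :=
        Finset.card_lt_card (Finset.ssubset_iff_subset_ne.mpr ⟨hXY, hne⟩)
      have hcY := h1 Y hY
      rw [if_neg hX, if_pos hY]; omega
    · rw [if_neg hX, if_neg hY]; omega
  · intro X Y
    show min (X ∪ Y).card (n / 2) - (if X ∪ Y ∈ S then 1 else 0) +
        (min (X ∩ Y).card (n / 2) - (if X ∩ Y ∈ S then 1 else 0)) ≤
      min X.card (n / 2) - (if X ∈ S then 1 else 0) +
        (min Y.card (n / 2) - (if Y ∈ S then 1 else 0))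
    have hab := Finset.card_union_add_card_inter X Y
    have hbc : (X ∩ Y).card ≤ X.card := Finset.card_le_card Finset.inter_subset_left
    have hbd : (X ∩ Y).card ≤ Y.card := Finset.card_le_card Finset.inter_subset_right
    have hca : X.card ≤ (X ∪ Y).card := Finset.card_le_card Finset.subset_union_left
    have hda : Y.card ≤ (X ∪ Y).card := Finset.card_le_card Finset.subset_union_right
    by_cases hX : X ∈ S <;> by_cases hY : Y ∈ S
    · by_cases hXY : X = Y
      · subst hXY
        simp [Finset.union_self, Finset.inter_self]
      · have hcX := h1 X hX
        have hcY := h1 Y hY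
        have hb2 := h2 X hX Y hY hXY
        have hUS : X ∪ Y ∉ S := fun h => by have := h1 _ h; omega
        have hIS : X ∩ Y ∉ S := fun h => by have := h1 _ h; omega
        rw [if_pos hX, if_pos hY, if_neg hUS, if_neg hIS]; omega
    · have hcX := h1 X hX
      by_cases hss : X ⊆ Y
      · rw [Finset.inter_eq_left.mpr hss, Finset.union_eq_right.mpr hss,
          if_pos hX, if_neg hY]; omega
      · by_cases hss' : Y ⊆ X
        · rw [Finset.inter_eq_right.mpr hss', Finset.union_eq_left.mpr hss',
            if_pos hX, if_neg hY]
        · have hbc' : (X ∩ Y).card < X.card :=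
            Finset.card_lt_card (Finset.ssubset_iff_subset_ne.mpr
              ⟨Finset.inter_subset_left, fun h => hss (Finset.inter_eq_left.mp h)⟩)
          have hbd' : (X ∩ Y).card < Y.card :=
            Finset.card_lt_card (Finset.ssubset_iff_subset_ne.mpr
              ⟨Finset.inter_subset_right, fun h => hss' (Finset.inter_eq_right.mp h)⟩)
          have hca' : X.card < (X ∪ Y).card :=
            Finset.card_lt_card (Finset.ssubset_iff_subset_ne.mpr
              ⟨Finset.subset_union_left, fun h => hss' (Finset.union_eq_left.mp h.symm)⟩)
          have hIS : X ∩ Y ∉ S := fun h => by have := h1 _ h; omega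
          have hUS : X ∪ Y ∉ S := fun h => by have := h1 _ h; omega
          rw [if_pos hX, if_neg hY, if_neg hUS, if_neg hIS]; omega
    · have hcY := h1 Y hY
      by_cases hss : Y ⊆ X
      · rw [Finset.inter_eq_right.mpr hss, Finset.union_eq_left.mpr hss,
          if_neg hX, if_pos hY]
      · by_cases hss' : X ⊆ Y
        · rw [Finset.inter_eq_left.mpr hss', Finset.union_eq_right.mpr hss',
            if_neg hX, if_pos hY]; omega
        · have hbc' : (X ∩ Y).card < X.card :=
            Finset.card_lt_card (Finset.ssubset_iff_subset_ne.mpr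
              ⟨Finset.inter_subset_left, fun h => hss' (Finset.inter_eq_left.mp h)⟩)
          have hbd' : (X ∩ Y).card < Y.card :=
            Finset.card_lt_card (Finset.ssubset_iff_subset_ne.mpr
              ⟨Finset.inter_subset_right, fun h => hss (Finset.inter_eq_right.mp h)⟩)
          have hda' : Y.card < (X ∪ Y).card :=
            Finset.card_lt_card (Finset.ssubset_iff_subset_ne.mpr
              ⟨Finset.subset_union_right, fun h => hss' (Finset.union_eq_right.mp h.symm)⟩)
          have hIS : X ∩ Y ∉ S := fun h => by have := h1 _ h; omega
          have hUS : X ∪ Y ∉ S := fun h => by have := h1 _ h; omega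
          rw [if_neg hX, if_pos hY, if_neg hUS, if_neg hIS]; omega
    · rw [if_neg hX, if_neg hY]
      split_ifs <;> omega

/-- (Welsh 1969, lower bound on the number of matroids, simplified form.)
There is an injection from sparse paving families into matroids on a fixed
`n`-element ground set; hence the number of matroids on `{1,…,n}` is at least
the number of such families. -/
theorem sparse_paving_families_inject_into_matroids (n : ℕ) (hn : 1 ≤ n) :
    ∃ f : {S : Finset (Finset (Fin n)) // IsSparsePavingFamily n S} →
          {r : Finset (Fin n) → ℕ // IsMatroidRank r},
      Function.Injective f := by
  by_cases hk : 1 ≤ n / 2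
  · refine ⟨fun S => ⟨fun X => min X.card (n / 2) - (if X ∈ S.1 then 1 else 0),
      sparse_paving_rank_isMatroid hk S.2⟩, ?_⟩
    intro S T h
    have hfun := congrArg Subtype.val h
    apply Subtype.ext
    ext A
    have hA' := congrFun hfun A
    simp only at hA'
    constructor
    · intro hA
      have hcA := S.2.1 A hA
      by_contra hT
      rw [if_pos hA, if_neg hT] at hA'
      omega
    · intro hA
      have hcA := T.2.1 A hA
      by_contra hT
      rw [if_neg hT, if_pos hA] at hA'
      omega
  · -- n / 2 = 0, so n = 1 and every sparse paving family is ⊆ {∅}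
    have hk0 : n / 2 = 0 := by omega
    refine ⟨fun S => if h : ∅ ∈ S.1 then
        ⟨fun _ => 0, fun X => Nat.zero_le _, fun _ _ _ => le_refl 0, fun _ _ => by simp⟩
      else
        ⟨fun X => X.card, fun X => le_refl _, fun X Y h => Finset.card_le_card h,
          fun X Y => le_of_eq (Finset.card_union_add_card_inter X Y)⟩, ?_⟩
    intro S T h
    have hSsub : ∀ A ∈ S.1, A = ∅ := fun A hA =>
      Finset.card_eq_zero.mp (by rw [S.2.1 A hA, hk0])
    have hTsub : ∀ A ∈ T.1, A = ∅ := fun A hA =>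
      Finset.card_eq_zero.mp (by rw [T.2.1 A hA, hk0])
    by_cases hS0 : ∅ ∈ S.1 <;> by_cases hT0 : ∅ ∈ T.1
    · apply Subtype.ext
      ext A
      constructor
      · intro hA; rw [hSsub A hA]; exact hT0
      · intro hA; rw [hTsub A hA]; exact hS0
    · exfalso
      simp only [dif_pos hS0, dif_neg hT0] at h
      have := congrFun (congrArg Subtype.val h) {⟨0, hn⟩}
      simp at this
    · exfalso
      simp only [dif_neg hS0, dif_pos hT0] at h
      have := congrFun (congrArg Subtype.val h) {⟨0, hn⟩}
      simp at this
    · apply Subtype.ext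
      ext A
      constructor
      · intro hA; exact absurd (hSsub A hA ▸ hA) hS0
      · intro hA; exact absurd (hTsub A hA ▸ hA) hT0
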